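/- arXiv:1302.3650 — 3 statements merged into one kernel-verified Lean document; each statement's English description precedes it below -/
import Mathlib

section
/- In a 3-quasi-Sasakian manifold of rank 4l+3, the Riemannian curvature satisfies R(X,Y)ξ_α = (c²/4)(η_α(X) ψ_α² Y − η_α(Y) ψ_α² X) for all vector fields X, Y. -/
/-!
Differentiating `∇ξ = -(c/2) ψ` once more gives `∇_X ∇_Y ξ = -(c/2) (ψ (∇_X Y) + (∇_X ψ) Y)`.
In `R(X,Y)ξ` the terms `ψ (∇_X Y) - ψ (∇_Y X)` cancel against `∇_{[X,Y]} ξ` since `∇` is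
torsion-free, and the `ξ`-components of `(∇_X ψ) Y - (∇_Y ψ) X` cancel since `ψ²` is self-adjoint.
-/

section QuasiSasakian

variable {V : Type*} [AddCommGroup V] [Module ℝ V]

lemma nabla_nabla_reeb (g : V →ₗ[ℝ] V →ₗ[ℝ] ℝ) (nabla : V →ₗ[ℝ] V →ₗ[ℝ] V)
    (ψ : V →ₗ[ℝ] V) (ξ : V) (η : V →ₗ[ℝ] ℝ) (c : ℝ)
    (hnablaξ : ∀ X : V, nabla X ξ = -((c/2) • ψ X))
    (hnablaψ : ∀ X Y : V, nabla X (ψ Y) - ψ (nabla X Y)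
        = (c/2) • (η Y • ψ (ψ X) - g (ψ (ψ X)) Y • ξ)) (X Y : V) :
    nabla X (nabla Y ξ)
      = -((c/2) • (ψ (nabla X Y) + (c/2) • (η Y • ψ (ψ X) - g (ψ (ψ X)) Y • ξ))) := by
  rw [hnablaξ, map_neg, map_smul, sub_eq_iff_eq_add'.mp (hnablaψ X Y)]

end QuasiSasakian

/-- In a 3-quasi-Sasakian manifold, `R(X,Y)ξ_α = (c²/4)(η_α(X) ψ_α² Y - η_α(Y) ψ_α² X)`,
where `R(X,Y)Z = ∇_X ∇_Y Z - ∇_Y ∇_X Z - ∇_{[X,Y]} Z`. -/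
theorem curvature_reeb {V : Type*} [AddCommGroup V] [Module ℝ V]
    (g : V →ₗ[ℝ] V →ₗ[ℝ] ℝ) (hsym : ∀ X Y, g X Y = g Y X)
    (nabla : V →ₗ[ℝ] V →ₗ[ℝ] V)
    (bracket : V → V → V)
    (htorsion : ∀ X Y : V, nabla X Y - nabla Y X = bracket X Y)
    (ψ : V →ₗ[ℝ] V) (ξ : V) (η : V →ₗ[ℝ] ℝ) (c : ℝ)
    (hnablaξ : ∀ X : V, nabla X ξ = -((c/2) • ψ X))
    (hnablaψ : ∀ X Y : V, nabla X (ψ Y) - ψ (nabla X Y)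
        = (c/2) • (η Y • ψ (ψ X) - g (ψ (ψ X)) Y • ξ))
    (hself : ∀ X Y, g (ψ (ψ X)) Y = g X (ψ (ψ Y))) :
    ∀ X Y : V, nabla X (nabla Y ξ) - nabla Y (nabla X ξ) - nabla (bracket X Y) ξ
      = (c^2/4) • (η X • ψ (ψ Y) - η Y • ψ (ψ X)) := by
  intro X Y
  have hnabla2 := nabla_nabla_reeb g nabla ψ ξ η c hnablaξ hnablaψ
  have hg : g (ψ (ψ Y)) X = g (ψ (ψ X)) Y := by rw [hself, hsym]
  rw [hnabla2, hnabla2, ← htorsion, hnablaξ, map_sub, hg]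
  module
end

section
/- In a 3-quasi-Sasakian manifold of rank 4l+3, for all horizontal vector fields X, Y, Z, W (i.e., sections of H = ∩_α ker η_α): g(R(X,Y)φ_α Z, φ_α W) = g(R(X,Y)Z, W) + (c²/4)[ Ψ_α(Y, ψ_α Z) g(ψ_α X, φ_α W) − Ψ_α(X, ψ_α Z) g(ψ_α Y, φ_α W) − Ψ_α(Y,Z) g(ψ_α² X, φ_α W) + Ψ_α(X,Z) g(ψ_α² Y, φ_α W) ]. -/
/-- The tensor `P_α` of Corollary `curvature3`, with `Ψ(X,Y) = g(X, ψ Y)`. -/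
noncomputable def Ptensor {V : Type*} [AddCommGroup V] [Module ℝ V]
    (g : V →ₗ[ℝ] V →ₗ[ℝ] ℝ) (ψ : V →ₗ[ℝ] V) (η : V →ₗ[ℝ] ℝ) (c : ℝ)
    (X Y Z W : V) : ℝ :=
  (c^2/4) * (g Y (ψ Z) * g X (ψ (ψ W)) - g X (ψ Z) * g Y (ψ (ψ W))
    + g Y (ψ (ψ Z)) * g X (ψ W) - g X (ψ (ψ Z)) * g Y (ψ W)
    - η X * η W * g Y (ψ Z) - η Y * η Z * g X (ψ W)
    + η Y * η W * g X (ψ Z) + η X * η Z * g Y (ψ W))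

/-!
Apply the identity `g(R(X,Y)φZ, W) + g(R(X,Y)Z, φW) = -P(X,Y,Z,W)` with `W` replaced by `φW`.
For horizontal `W` we have `φ²W = -W`, so `g(R(X,Y)φZ, φW) = g(R(X,Y)Z, W) - P(X,Y,Z,φW)`.
Every `η`-term of `P` carries a factor `η X` or `η Y`, hence vanishes, and the skew-symmetry
of `ψ` moves the remaining `ψ`'s from the argument `φW` onto `X` and `Y`.
-/

section

variable {V : Type*} [AddCommGroup V] [Module ℝ V] (g : V →ₗ[ℝ] V →ₗ[ℝ] ℝ)

theorem Ptensor_eq_of_eta_eq_zero (ψ : V →ₗ[ℝ] V) (η : V →ₗ[ℝ] ℝ) (c : ℝ) {X Y : V}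
    (hX : η X = 0) (hY : η Y = 0) (Z W : V) :
    Ptensor g ψ η c X Y Z W =
      (c^2/4) * (g Y (ψ Z) * g X (ψ (ψ W)) - g X (ψ Z) * g Y (ψ (ψ W))
        + g Y (ψ (ψ Z)) * g X (ψ W) - g X (ψ (ψ Z)) * g Y (ψ W)) := by
  simp only [Ptensor, hX, hY, zero_mul, sub_zero, add_zero]

theorem map_map_left_of_skew {ψ : V →ₗ[ℝ] V} (hskew : ∀ X Y, g (ψ X) Y = - g X (ψ Y))
    (X Y : V) : g (ψ (ψ X)) Y = g X (ψ (ψ Y)) := by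
  rw [hskew, hskew, neg_neg]

theorem curvature_map_map_eq_sub_of_map_map_eq_neg {R : V → V → V → V} {φ : V →ₗ[ℝ] V}
    {P : V → V → V → V → ℝ}
    (hcurv : ∀ X Y Z W, g (R X Y (φ Z)) W + g (R X Y Z) (φ W) = - P X Y Z W)
    {W : V} (hW : φ (φ W) = -W) (X Y Z : V) :
    g (R X Y (φ Z)) (φ W) = g (R X Y Z) W - P X Y Z (φ W) := by
  have h := hcurv X Y Z (φ W)
  rw [hW, map_neg] at h
  linarith

end

theorem curvature_horizontal_general {V : Type*} [AddCommGroup V] [Module ℝ V]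
    (g : V →ₗ[ℝ] V →ₗ[ℝ] ℝ)
    (R : V → V → V → V)
    (φ ψ : Fin 3 → V →ₗ[ℝ] V) (ξ : Fin 3 → V) (η : Fin 3 → V →ₗ[ℝ] ℝ) (c : ℝ)
    (hsq : ∀ α X, φ α (φ α X) = -X + η α X • ξ α)
    (hskewψ : ∀ α X Y, g (ψ α X) Y = - g X (ψ α Y))
    (hcor3 : ∀ α, ∀ X Y Z W : V,
      g (R X Y (φ α Z)) W + g (R X Y Z) (φ α W)
        = - Ptensor g (ψ α) (η α) c X Y Z W) :
    ∀ α, ∀ X Y Z W : V,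
      (∀ i, η i X = 0) → (∀ i, η i Y = 0) → (∀ i, η i Z = 0) → (∀ i, η i W = 0) →
      g (R X Y (φ α Z)) (φ α W)
        = g (R X Y Z) W
          + (c^2/4) * (g Y (ψ α (ψ α Z)) * g (ψ α X) (φ α W)
              - g X (ψ α (ψ α Z)) * g (ψ α Y) (φ α W)
              - g Y (ψ α Z) * g (ψ α (ψ α X)) (φ α W)
              + g X (ψ α Z) * g (ψ α (ψ α Y)) (φ α W)) := by
  intro α X Y Z W hX hY _ hW
  have hφφ : φ α (φ α W) = -W := by rw [hsq, hW α, zero_smul, add_zero]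
  rw [curvature_map_map_eq_sub_of_map_map_eq_neg g (hcor3 α) hφφ,
    Ptensor_eq_of_eta_eq_zero g _ _ c (hX α) (hY α),
    map_map_left_of_skew g (hskewψ α) X, map_map_left_of_skew g (hskewψ α) Y,
    hskewψ α X, hskewψ α Y]
  ring

/-- In a 3-quasi-Sasakian manifold of rank `4l+3`, for horizontal vector fields
`X, Y, Z, W` (sections of `H = ∩_α ker η_α`):
`g(R(X,Y)φ_α Z, φ_α W) = g(R(X,Y)Z, W) + (c²/4)[Ψ_α(Y,ψ_α Z) g(ψ_α X, φ_α W)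
 - Ψ_α(X,ψ_α Z) g(ψ_α Y, φ_α W) - Ψ_α(Y,Z) g(ψ_α² X, φ_α W)
 + Ψ_α(X,Z) g(ψ_α² Y, φ_α W)]`. -/
theorem curvature_horizontal {V : Type*} [AddCommGroup V] [Module ℝ V]
    (g : V →ₗ[ℝ] V →ₗ[ℝ] ℝ) (hsym : ∀ X Y, g X Y = g Y X)
    (R : V → V → V → V)
    (φ ψ : Fin 3 → V →ₗ[ℝ] V) (ξ : Fin 3 → V) (η : Fin 3 → V →ₗ[ℝ] ℝ) (c : ℝ)
    (hsq : ∀ α X, φ α (φ α X) = -X + η α X • ξ α)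
    (hη : ∀ α X, η α X = g X (ξ α))
    (hηψ : ∀ α X, η α (ψ α X) = 0)
    (hskewφ : ∀ α X Y, g (φ α X) Y = - g X (φ α Y))
    (hskewψ : ∀ α X Y, g (ψ α X) Y = - g X (ψ α Y))
    (hcor3 : ∀ α, ∀ X Y Z W : V,
      g (R X Y (φ α Z)) W + g (R X Y Z) (φ α W)
        = - Ptensor g (ψ α) (η α) c X Y Z W) :
    ∀ α, ∀ X Y Z W : V,
      (∀ i, η i X = 0) → (∀ i, η i Y = 0) → (∀ i, η i Z = 0) → (∀ i, η i W = 0) →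
      g (R X Y (φ α Z)) (φ α W)
        = g (R X Y Z) W
          + (c^2/4) * (g Y (ψ α (ψ α Z)) * g (ψ α X) (φ α W)
              - g X (ψ α (ψ α Z)) * g (ψ α Y) (φ α W)
              - g Y (ψ α Z) * g (ψ α (ψ α X)) (φ α W)
              + g X (ψ α Z) * g (ψ α (ψ α Y)) (φ α W)) :=
  curvature_horizontal_general g R φ ψ ξ η c hsq hskewψ hcor3
end

section
/- In a 3-quasi-Sasakian manifold of rank 4l+3, for any unit horizontal vector field X the three φ-sectional curvatures satisfy H₁(X) + H₂(X) + H₃(X) = (3c²/4) g(X_E, X_E)², where X_E is the orthogonal projection of X onto the distribution E^{4l}. -/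
/-- An even permutation of (0,1,2) in `Fin 3`. -/
def EvenPerm (a b c : Fin 3) : Prop :=
  (a, b, c) = (0, 1, 2) ∨ (a, b, c) = (1, 2, 0) ∨ (a, b, c) = (2, 0, 1)

/-! For horizontal `X`, each `φ_α X` is again horizontal: for an even permutation `(a, b, k)`
the numbers `u = η_a(φ_b X)` and `s = η_a(φ_k X)` satisfy `u s = 0` and `u² = s²`, both instances
of the antisymmetry of `(Y, Z) ↦ η_a(φ_a Y) η_a(Z)`. Hence `ψ_α = φ_α ∘ proj` applies to `φ_β X`,
and Corollary 3 at `(X, φ_a X, X, φ_k X)` with `α = b` gives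
`g(R(X, φ_a X) φ_b X, φ_k X) - H_a(X) = -(c²/4) g(X_E, X_E)²`. Summed over the three cyclic
permutations, the first terms cancel by the first Bianchi identity. -/
theorem EvenPerm.rotate {a b c : Fin 3} (h : EvenPerm a b c) : EvenPerm b c a := by
  revert a b c; unfold EvenPerm; decide

theorem evenPerm_add_one_add_two (a : Fin 3) : EvenPerm a (a + 1) (a + 2) := by
  revert a; unfold EvenPerm; decide

section AlmostContact

variable {V : Type*} [AddCommGroup V] [Module ℝ V] {g : V →ₗ[ℝ] V →ₗ[ℝ] ℝ}

theorem g_self_apply_eq_zero_of_skew (hsym : ∀ X Y, g X Y = g Y X) {f : V →ₗ[ℝ] V}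
    (hf : ∀ X Y, g (f X) Y = - g X (f Y)) (X : V) : g X (f X) = 0 := by
  linarith [hf X X, hsym (f X) X]

theorem eta_phi_mul_eta_antisymm (hsym : ∀ X Y, g X Y = g Y X) {φ : V →ₗ[ℝ] V} {ξ : V}
    {η : V →ₗ[ℝ] ℝ} (hsq : ∀ X, φ (φ X) = -X + η X • ξ) (hη : ∀ X, η X = g X ξ)
    (hskew : ∀ X Y, g (φ X) Y = - g X (φ Y)) (Y Z : V) :
    η (φ Y) * η Z = -(η Y * η (φ Z)) := by
  -- `φ³ Y` expanded as `φ² (φ Y)` and as `φ (φ² Y)`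
  have hcube : η (φ Y) • ξ = η Y • φ ξ := by
    have h := congrArg φ (hsq Y)
    rw [map_add, map_neg, map_smul, hsq (φ Y)] at h
    exact add_left_cancel h
  have h := congrArg (fun v => g v Z) hcube
  simp only [map_smul, LinearMap.smul_apply, smul_eq_mul, hskew] at h
  rw [hsym ξ Z, hsym ξ (φ Z), ← hη, ← hη] at h
  linarith

end AlmostContact

section Quaternionic

variable {V : Type*} [AddCommGroup V] [Module ℝ V] {g : V →ₗ[ℝ] V →ₗ[ℝ] ℝ}
  {φ : Fin 3 → V →ₗ[ℝ] V} {ξ : Fin 3 → V} {η : Fin 3 → V →ₗ[ℝ] ℝ}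

theorem phi_phi_eq_of_evenPerm
    (hquat : ∀ a b c', EvenPerm a b c' → ∀ X, φ c' X = φ a (φ b X) - η b X • ξ a)
    {a b k : Fin 3} (habk : EvenPerm a b k) {X : V} (hX : η b X = 0) :
    φ a (φ b X) = φ k X := by
  rw [hquat a b k habk X, hX, zero_smul, sub_zero]

theorem eta_phi_eq_zero_of_evenPerm (hsym : ∀ X Y, g X Y = g Y X)
    (hsq : ∀ α X, φ α (φ α X) = -X + η α X • ξ α) (hη : ∀ α X, η α X = g X (ξ α))
    (hquat : ∀ a b c', EvenPerm a b c' → ∀ X, φ c' X = φ a (φ b X) - η b X • ξ a)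
    (hskewφ : ∀ α X Y, g (φ α X) Y = - g X (φ α Y))
    {a b k : Fin 3} (habk : EvenPerm a b k) {X : V} (hX : ∀ i, η i X = 0) :
    η a (φ b X) = 0 ∧ η a (φ k X) = 0 := by
  set u := η a (φ b X) with hu_def
  set s := η a (φ k X)
  have anti := eta_phi_mul_eta_antisymm hsym (hsq a) (hη a) (hskewφ a)
  have hu : η a (φ a (φ k X)) = -u := by
    have hb : φ k (φ a (ξ a)) = φ b (ξ a) + η a (ξ a) • ξ k := by
      rw [hquat k a b habk.rotate.rotate (ξ a), sub_add_cancel]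
    calc η a (φ a (φ k X)) = g X (φ k (φ a (ξ a))) := by rw [hη, hskewφ, hskewφ, neg_neg]
      _ = g X (φ b (ξ a)) := by
        rw [hb, map_add, map_smul, ← hη, hX k, smul_zero, add_zero]
      _ = -u := by rw [hu_def, hη, hskewφ, neg_neg]
  have hus : u * s = 0 := by
    have h := anti (φ k X) (φ k X)
    rw [hu] at h
    linarith
  have hsq' : u ^ 2 = s ^ 2 := by
    have h := anti (φ k X) (φ b X)
    rw [hu, phi_phi_eq_of_evenPerm hquat habk (hX b)] at h
    linarith
  have hu0 : u = 0 := pow_eq_zero_iff (n := 4) (by norm_num) |>.mp (by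
    calc u ^ 4 = u ^ 2 * s ^ 2 := by rw [← hsq']; ring
      _ = (u * s) ^ 2 := by ring
      _ = 0 := by rw [hus]; ring)
  refine ⟨hu0, ?_⟩
  have : s ^ 2 = 0 := by rw [← hsq', hu0]; ring
  exact pow_eq_zero_iff (n := 2) (by norm_num) |>.mp this

theorem eta_phi_eq_zero (hsym : ∀ X Y, g X Y = g Y X)
    (hsq : ∀ α X, φ α (φ α X) = -X + η α X • ξ α) (hη : ∀ α X, η α X = g X (ξ α))
    (hquat : ∀ a b c', EvenPerm a b c' → ∀ X, φ c' X = φ a (φ b X) - η b X • ξ a)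
    (hskewφ : ∀ α X Y, g (φ α X) Y = - g X (φ α Y))
    {X : V} (hX : ∀ i, η i X = 0) (i j : Fin 3) : η i (φ j X) = 0 := by
  have hoff := eta_phi_eq_zero_of_evenPerm hsym hsq hη hquat hskewφ
    (evenPerm_add_one_add_two i) hX
  obtain rfl | rfl | rfl : j = i ∨ j = i + 1 ∨ j = i + 2 := by
    clear hoff; revert i j; decide
  · have h := eta_phi_mul_eta_antisymm hsym (hsq j) (hη j) (hskewφ j) X (φ j X)
    rw [hX j, zero_mul, neg_zero] at h
    exact mul_self_eq_zero.mp h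
  exacts [hoff.1, hoff.2]

end Quaternionic

section Projection

variable {V : Type*} [AddCommGroup V] [Module ℝ V] {g : V →ₗ[ℝ] V →ₗ[ℝ] ℝ}
  {φ ψ : Fin 3 → V →ₗ[ℝ] V} {ξ : Fin 3 → V} {η : Fin 3 → V →ₗ[ℝ] ℝ} {proj : V →ₗ[ℝ] V}

theorem g_proj_eq_g_proj_proj (hidem : ∀ X, proj (proj X) = proj X)
    (hprojsa : ∀ X Y, g (proj X) Y = g X (proj Y)) (X : V) :
    g (proj X) X = g (proj X) (proj X) := by
  rw [← hprojsa, hidem]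

theorem g_proj_phi_eq_zero (hsym : ∀ X Y, g X Y = g Y X)
    (hskewφ : ∀ α X Y, g (φ α X) Y = - g X (φ α Y))
    (hskewψ : ∀ α X Y, g (ψ α X) Y = - g X (ψ α Y))
    (hψproj : ∀ α, ∀ X : V, (∀ i, η i X = 0) → ψ α X = φ α (proj X))
    {X : V} (hX : ∀ i, η i X = 0) (j : Fin 3) : g (proj X) (φ j X) = 0 := by
  rw [← neg_eq_zero, ← hskewφ, ← hψproj j X hX, hsym]
  exact g_self_apply_eq_zero_of_skew hsym (hskewψ j) X

theorem g_phi_proj_phi_eq (hcompat : ∀ α X Y, g (φ α X) (φ α Y) = g X Y - η α X * η α Y)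
    (hskewφ : ∀ α X Y, g (φ α X) Y = - g X (φ α Y))
    (hskewψ : ∀ α X Y, g (ψ α X) Y = - g X (ψ α Y))
    (hidem : ∀ X, proj (proj X) = proj X) (hprojsa : ∀ X Y, g (proj X) Y = g X (proj Y))
    (hψproj : ∀ α, ∀ X : V, (∀ i, η i X = 0) → ψ α X = φ α (proj X))
    {X : V} (hX : ∀ i, η i X = 0) {j : Fin 3} (hφX : ∀ i, η i (φ j X) = 0) :
    g (φ j X) (proj (φ j X)) = g (proj X) (proj X) := by
  -- both sides are `-g X (ψ j (φ j X))`
  have h₁ : g X (ψ j (φ j X)) = - g (φ j X) (proj (φ j X)) := by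
    rw [hψproj j _ hφX, hskewφ, neg_neg]
  have h₂ : g X (ψ j (φ j X)) = - g (proj X) (proj X) := by
    have h := hskewψ j X (φ j X)
    rw [hψproj j X hX, hcompat, hX j, mul_zero, sub_zero, g_proj_eq_g_proj_proj hidem hprojsa] at h
    linarith
  linarith

theorem Ptensor_phi_evenPerm (c : ℝ) (hsym : ∀ X Y, g X Y = g Y X)
    (hquat : ∀ a b c', EvenPerm a b c' → ∀ X, φ c' X = φ a (φ b X) - η b X • ξ a)
    (hcompat : ∀ α X Y, g (φ α X) (φ α Y) = g X Y - η α X * η α Y)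
    (hskewφ : ∀ α X Y, g (φ α X) Y = - g X (φ α Y))
    (hskewψ : ∀ α X Y, g (ψ α X) Y = - g X (ψ α Y))
    (hidem : ∀ X, proj (proj X) = proj X) (hprojsa : ∀ X Y, g (proj X) Y = g X (proj Y))
    (hprojhor : ∀ X, ∀ i, η i (proj X) = 0)
    (hψproj : ∀ α, ∀ X : V, (∀ i, η i X = 0) → ψ α X = φ α (proj X))
    {a b k : Fin 3} (habk : EvenPerm a b k) {X : V} (hX : ∀ i, η i X = 0)
    (hφX : ∀ i, η i (φ a X) = 0) :
    Ptensor g (ψ b) (η b) c X (φ a X) X (φ k X) = c ^ 2 / 4 * g (proj X) (proj X) ^ 2 := by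
  have hψX : ∀ j, ψ j X = φ j (proj X) := fun j => hψproj j X hX
  have h₁ : g X (ψ b X) = 0 := g_self_apply_eq_zero_of_skew hsym (hskewψ b) X
  have h₂ : g (φ a X) (ψ b X) = 0 := by
    rw [hψX, hskewφ, phi_phi_eq_of_evenPerm hquat habk (hprojhor X b), ← hψX,
      g_self_apply_eq_zero_of_skew hsym (hskewψ k), neg_zero]
  have h₃ : g X (ψ b (φ k X)) = 0 := by
    rw [← neg_eq_zero, ← hskewψ, hψX, hskewφ, phi_phi_eq_of_evenPerm hquat habk.rotate (hX k),
      g_proj_phi_eq_zero hsym hskewφ hskewψ hψproj hX, neg_zero]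
  have h₄ : g X (ψ b (ψ b X)) = - g (proj X) (proj X) := by
    rw [← neg_neg (g X _), ← hskewψ, hψX, hcompat, hprojhor X b, mul_zero, sub_zero]
  have h₅ : g (φ a X) (ψ b (φ k X)) = g (proj X) (proj X) := by
    rw [← neg_neg (g _ _), ← hskewψ, hψproj b _ hφX, hskewφ, neg_neg,
      phi_phi_eq_of_evenPerm hquat habk.rotate (hX k), hsym,
      g_phi_proj_phi_eq hcompat hskewφ hskewψ hidem hprojsa hψproj hX hφX]
  unfold Ptensor
  rw [h₁, h₂, h₃, h₄, h₅, hX b]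
  ring

end Projection

section Curvature

variable {V : Type*} [AddCommGroup V] [Module ℝ V] {g : V →ₗ[ℝ] V →ₗ[ℝ] ℝ} {R : V → V → V → V}
  {φ ψ : Fin 3 → V →ₗ[ℝ] V} {ξ : Fin 3 → V} {η : Fin 3 → V →ₗ[ℝ] ℝ} {proj : V →ₗ[ℝ] V}

theorem g_R_swap_right (hRskew : ∀ X Y Z W : V, g (R X Y Z) W = - g (R Y X Z) W)
    (hRpair : ∀ X Y Z W : V, g (R X Y Z) W = g (R Z W X) Y) (X Y Z W : V) :
    g (R X Y Z) W = - g (R X Y W) Z := by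
  rw [hRpair X Y Z W, hRskew Z W X Y, hRpair W Z X Y]

theorem g_R_cyclic_sum (hbianchi : ∀ X Y Z : V, R X Y Z + R Y Z X + R Z X Y = 0)
    (hRskew : ∀ X Y Z W : V, g (R X Y Z) W = - g (R Y X Z) W)
    (hRpair : ∀ X Y Z W : V, g (R X Y Z) W = g (R Z W X) Y) (X A B C : V) :
    g (R X A B) C + g (R X B C) A + g (R X C A) B = 0 := by
  have h := congrArg (fun v => g v C) (hbianchi X A B)
  simp only [map_add, map_zero, LinearMap.add_apply, LinearMap.zero_apply] at h
  rw [hRpair A B X C, hRskew B X A C, g_R_swap_right hRskew hRpair X B A C] at h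
  linarith

theorem g_R_phi_phi_sub_phiSectional (c : ℝ) (hsym : ∀ X Y, g X Y = g Y X)
    (hquat : ∀ a b c', EvenPerm a b c' → ∀ X, φ c' X = φ a (φ b X) - η b X • ξ a)
    (hcompat : ∀ α X Y, g (φ α X) (φ α Y) = g X Y - η α X * η α Y)
    (hskewφ : ∀ α X Y, g (φ α X) Y = - g X (φ α Y))
    (hskewψ : ∀ α X Y, g (ψ α X) Y = - g X (ψ α Y))
    (hRskew : ∀ X Y Z W : V, g (R X Y Z) W = - g (R Y X Z) W)
    (hRpair : ∀ X Y Z W : V, g (R X Y Z) W = g (R Z W X) Y)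
    (hcor3 : ∀ α, ∀ X Y Z W : V,
      g (R X Y (φ α Z)) W + g (R X Y Z) (φ α W) = - Ptensor g (ψ α) (η α) c X Y Z W)
    (hidem : ∀ X, proj (proj X) = proj X) (hprojsa : ∀ X Y, g (proj X) Y = g X (proj Y))
    (hprojhor : ∀ X, ∀ i, η i (proj X) = 0)
    (hψproj : ∀ α, ∀ X : V, (∀ i, η i X = 0) → ψ α X = φ α (proj X))
    {a b k : Fin 3} (habk : EvenPerm a b k) {X : V} (hX : ∀ i, η i X = 0)
    (hφX : ∀ i, η i (φ a X) = 0) :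
    g (R X (φ a X) (φ b X)) (φ k X) - g (R X (φ a X) (φ a X)) X
      = -(c ^ 2 / 4 * g (proj X) (proj X) ^ 2) := by
  have h := hcor3 b X (φ a X) X (φ k X)
  rw [phi_phi_eq_of_evenPerm hquat habk.rotate (hX k), g_R_swap_right hRskew hRpair X _ X,
    Ptensor_phi_evenPerm c hsym hquat hcompat hskewφ hskewψ hidem hprojsa hprojhor hψproj habk hX
      hφX] at h
  linarith

end Curvature

/-- In a 3-quasi-Sasakian manifold of rank `4l+3`, for any unit horizontal vector
field `X` the three `φ`-sectional curvatures `H_α(X) = g(R(X, φ_α X)φ_α X, X)` satisfy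
`H₁(X) + H₂(X) + H₃(X) = (3c²/4) g(X_E, X_E)²`, where `X_E = proj X` is the orthogonal
projection of `X` onto the distribution `E^{4l}`. -/
theorem phi_sectional_sum {V : Type*} [AddCommGroup V] [Module ℝ V]
    (g : V →ₗ[ℝ] V →ₗ[ℝ] ℝ) (hsym : ∀ X Y, g X Y = g Y X)
    (R : V → V → V → V)
    (φ ψ : Fin 3 → V →ₗ[ℝ] V) (ξ : Fin 3 → V) (η : Fin 3 → V →ₗ[ℝ] ℝ) (c : ℝ)
    (hsq : ∀ α X, φ α (φ α X) = -X + η α X • ξ α)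
    (hη : ∀ α X, η α X = g X (ξ α))
    (hquat : ∀ a b c', EvenPerm a b c' → ∀ X,
      φ c' X = φ a (φ b X) - η b X • ξ a)
    (hcompat : ∀ α X Y, g (φ α X) (φ α Y) = g X Y - η α X * η α Y)
    (hskewφ : ∀ α X Y, g (φ α X) Y = - g X (φ α Y))
    (hskewψ : ∀ α X Y, g (ψ α X) Y = - g X (ψ α Y))
    (hbianchi : ∀ X Y Z : V, R X Y Z + R Y Z X + R Z X Y = 0)
    (hRskew : ∀ X Y Z W : V, g (R X Y Z) W = - g (R Y X Z) W)
    (hRpair : ∀ X Y Z W : V, g (R X Y Z) W = g (R Z W X) Y)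
    (hcor3 : ∀ α, ∀ X Y Z W : V,
      g (R X Y (φ α Z)) W + g (R X Y Z) (φ α W)
        = - Ptensor g (ψ α) (η α) c X Y Z W)
    -- the orthogonal projection onto the distribution E^{4l}
    (proj : V →ₗ[ℝ] V)
    (hidem : ∀ X, proj (proj X) = proj X)
    (hprojsa : ∀ X Y, g (proj X) Y = g X (proj Y))
    (hprojhor : ∀ X, ∀ i, η i (proj X) = 0)
    (hψproj : ∀ α, ∀ X : V, (∀ i, η i X = 0) → ψ α X = φ α (proj X)) :
    ∀ X : V, (∀ i, η i X = 0) → g X X = 1 →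
      g (R X (φ 0 X) (φ 0 X)) X + g (R X (φ 1 X) (φ 1 X)) X
          + g (R X (φ 2 X) (φ 2 X)) X
        = (3 * c^2 / 4) * (g (proj X) (proj X))^2 := by
  intro X hX _
  have hφX := eta_phi_eq_zero hsym hsq hη hquat hskewφ hX
  have hcyc (a b k : Fin 3) (habk : EvenPerm a b k) :=
    g_R_phi_phi_sub_phiSectional c hsym hquat hcompat hskewφ hskewψ hRskew hRpair hcor3 hidem
      hprojsa hprojhor hψproj habk hX (fun i => hφX i a)
  linear_combination g_R_cyclic_sum hbianchi hRskew hRpair X (φ 0 X) (φ 1 X) (φ 2 X)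
    - hcyc 0 1 2 (Or.inl rfl) - hcyc 1 2 0 (Or.inr (Or.inl rfl)) - hcyc 2 0 1 (Or.inr (Or.inr rfl))
end
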